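/- Averaging convergence in the DLL (asymptotic consensus): Let x, y : ℕ → ℝ be the values of processes p and q under the averaging algorithm driven by an admissible DLL pattern σ: in a round with graph pqp, both update to (x+y)/2; with pq only q updates to (x+y)/2; with qp only p updates to (x+y)/2; with none, neither updates. If σ is admissible (infinitely many non-silent rounds), then |x(r) − y(r)| → 0 as r → ∞; moreover if some round has graph pqp, the values are equal from that round onward. -/
import Mathlib


/-- The four possible round graphs in the Delayed Lossy-Link model. -/
inductive DLLGraph : Type
  | pq | qp | pqp | silent
deriving DecidableEq

set_option maxHeartbeats 1000000 in
open DLLGraph in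
/-- Averaging convergence in the DLL: under the averaging update rules driven
by an admissible DLL pattern, the distance between the two processes' values
tends to 0; moreover after any round with graph pqp the values coincide. -/
theorem stmt_11 (σ : ℕ → DLLGraph) (x y : ℕ → ℝ)
    (hadm : {r : ℕ | σ r ≠ silent}.Infinite)
    (hx : ∀ r, x (r + 1) =
      if σ r = qp ∨ σ r = pqp then (x r + y r) / 2 else x r)
    (hy : ∀ r, y (r + 1) =
      if σ r = pq ∨ σ r = pqp then (x r + y r) / 2 else y r) :
    Filter.Tendsto (fun r => |x r - y r|) Filter.atTop (nhds 0) ∧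
    (∀ r, σ r = pqp → ∀ s, r < s → x s = y s) := by
  set d : ℕ → ℝ := fun r => |x r - y r| with hd
  have habs : ∀ a b : ℝ, |(a - b) / 2| ≤ |a - b| / 2 := by
    intro a b; rw [abs_div]; simp [abs_of_nonneg]
  have hhalf : ∀ r, σ r ≠ silent → d (r + 1) ≤ d r / 2 := by
    intro r hr
    have hxr := hx r
    have hyr := hy r
    cases h : σ r <;> simp [h] at hxr hyr hr ⊢
    · -- pq
      simp only [hd, hxr, hyr]
      calc |x r - (x r + y r) / 2| = |(x r - y r) / 2| := by ring_nf
        _ ≤ |x r - y r| / 2 := habs _ _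
    · -- qp
      simp only [hd, hxr, hyr]
      calc |(x r + y r) / 2 - y r| = |(x r - y r) / 2| := by ring_nf
        _ ≤ |x r - y r| / 2 := habs _ _
    · -- pqp
      simp only [hd, hxr, hyr]
      simp
      positivity
  have hmono : ∀ r, d (r + 1) ≤ d r := by
    intro r
    by_cases hr : σ r = silent
    · have hxr := hx r
      have hyr := hy r
      simp [hr] at hxr hyr
      simp [hd, hxr, hyr]
    · have := hhalf r hr
      have h0 : (0:ℝ) ≤ d r := abs_nonneg _
      linarith
  have hant : Antitone d := antitone_nat_of_succ_le hmono
  have hbdd : BddBelow (Set.range d) := ⟨0, by rintro _ ⟨r, rfl⟩; exact abs_nonneg _⟩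
  have hL : Filter.Tendsto d Filter.atTop (nhds (⨅ r, d r)) :=
    tendsto_atTop_ciInf hant hbdd
  set L := ⨅ r, d r with hLdef
  have hL0 : 0 ≤ L := le_ciInf fun r => abs_nonneg _
  -- extract subsequence of non-silent rounds
  have hfreq : ∃ᶠ r in Filter.atTop, σ r ≠ silent :=
    Nat.frequently_atTop_iff_infinite.2 hadm
  obtain ⟨φ, hφmono, hφ⟩ := Filter.extraction_of_frequently_atTop hfreq
  have hφtop : Filter.Tendsto φ Filter.atTop Filter.atTop := hφmono.tendsto_atTop
  have h1 : Filter.Tendsto (fun n => d (φ n)) Filter.atTop (nhds L) := hL.comp hφtop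
  have h2 : Filter.Tendsto (fun n => d (φ n + 1)) Filter.atTop (nhds L) :=
    hL.comp (Filter.tendsto_atTop_mono (fun n => Nat.le_succ (φ n)) hφtop)
  have hLle : L ≤ L / 2 := by
    have h3 : Filter.Tendsto (fun n => d (φ n) / 2) Filter.atTop (nhds (L / 2)) :=
      h1.div_const 2
    exact le_of_tendsto_of_tendsto' h2 h3 fun n => hhalf (φ n) (hφ n)
  have hLzero : L = 0 := by linarith
  refine ⟨hLzero ▸ hL, ?_⟩
  intro r hr s hs
  have heq : x (r + 1) = y (r + 1) := by
    have hxr := hx r; have hyr := hy r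
    simp [hr] at hxr hyr
    rw [hxr, hyr]
  have key : ∀ t, x (r + 1 + t) = y (r + 1 + t) := by
    intro t
    induction t with
    | zero => simpa using heq
    | succ t ih =>
        have hxr := hx (r + 1 + t); have hyr := hy (r + 1 + t)
        rw [show r + 1 + (t + 1) = (r + 1 + t) + 1 by ring, hxr, hyr]
        cases h : σ (r + 1 + t) <;> simp [h, ih]
  have : s = r + 1 + (s - (r + 1)) := by omega
  rw [this]; exact key _
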